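/- Let X, Y be finite compact metric spaces, K ∈ K_n(X) d-bounded for d > 0 with n ≤ |Y|. If some i ∈ {1,…,n} satisfies ||row_i(K) - row_i(L)||_∞ ≥ d for every L that is a permutation similarity of an n×n principal submatrix of D^Y, then d̂_GH(X, Y) ≥ d/2. -/

import Mathlib

/-- The distortion of a map `φ` between metric spaces. -/
noncomputable def mapDistortion {X Y : Type*} [MetricSpace X] [MetricSpace Y]
    (φ : X → Y) : ℝ :=
  ⨆ a : X, ⨆ b : X, |dist a b - dist (φ a) (φ b)|

/-- The modified Gromov–Hausdorff distance
`d̂_GH(X,Y) = (1/2) max {inf_φ dis φ, inf_ψ dis ψ}`. -/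
noncomputable def modGH (X Y : Type*) [MetricSpace X] [MetricSpace Y] : ℝ :=
  (1 / 2) * max (⨅ φ : X → Y, mapDistortion φ) (⨅ ψ : Y → X, mapDistortion ψ)

/-!
A map `φ : X → Y` either identifies two of the `d`-separated points `x j`, `x k`, and then
`dist (x j) (x k) ≥ d` is itself a distortion, or it is injective on them, and then `φ ∘ x` is
one of the admissible `σ`, so the row condition at `i` bounds the distortion of `φ` by `d`.
Hence every map `X → Y` has distortion at least `d`.
-/

section Distortion

variable {X Y : Type*} [MetricSpace X] [MetricSpace Y]

theorem abs_dist_sub_dist_le_mapDistortion [Finite X] (φ : X → Y) (a b : X) :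
    |dist a b - dist (φ a) (φ b)| ≤ mapDistortion φ :=
  calc |dist a b - dist (φ a) (φ b)|
      ≤ ⨆ b', |dist a b' - dist (φ a) (φ b')| :=
        le_ciSup (f := fun b' => |dist a b' - dist (φ a) (φ b')|)
          (Set.finite_range _).bddAbove b
    _ ≤ mapDistortion φ :=
        le_ciSup (f := fun a' => ⨆ b', |dist a' b' - dist (φ a') (φ b')|)
          (Set.finite_range _).bddAbove a

theorem dist_le_mapDistortion_of_map_eq [Finite X] {φ : X → Y} {a b : X}
    (hab : φ a = φ b) : dist a b ≤ mapDistortion φ := by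
  simpa [hab] using abs_dist_sub_dist_le_mapDistortion φ a b

theorem le_mapDistortion_of_separated_of_forall_injective [Finite X] {ι : Type*}
    {d : ℝ} (x : ι → X) (hx : ∀ j k, j ≠ k → d ≤ dist (x j) (x k)) (i : ι)
    (hi : ∀ σ : ι → Y, Function.Injective σ →
      d ≤ ⨆ k, |dist (x i) (x k) - dist (σ i) (σ k)|)
    (φ : X → Y) : d ≤ mapDistortion φ := by
  by_cases hinj : Function.Injective (φ ∘ x)
  · have : Nonempty ι := ⟨i⟩
    exact (hi (φ ∘ x) hinj).trans
      (ciSup_le fun k => abs_dist_sub_dist_le_mapDistortion φ (x i) (x k))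
  · obtain ⟨j, k, hφ, hjk⟩ := Function.not_injective_iff.mp hinj
    exact (hx j k hjk).trans (dist_le_mapDistortion_of_map_eq hφ)

theorem le_modGH_of_forall_le_mapDistortion [Nonempty Y] {d : ℝ}
    (h : ∀ φ : X → Y, d ≤ mapDistortion φ) : d / 2 ≤ modGH X Y := by
  have hinf : d ≤ max (⨅ φ : X → Y, mapDistortion φ) (⨅ ψ : Y → X, mapDistortion ψ) :=
    (le_ciInf h).trans (le_max_left _ _)
  unfold modGH
  linarith

end Distortion

theorem stmt_14_general {X Y : Type*} [MetricSpace X] [MetricSpace Y]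
    [Fintype X] [Nonempty Y] {n : ℕ} {d : ℝ}
    (x : Fin n → X) (hK : ∀ i j : Fin n, i ≠ j → d ≤ dist (x i) (x j))
    (h : ∃ i : Fin n, ∀ σ : Fin n → Y, Function.Injective σ →
      d ≤ ⨆ k : Fin n, |dist (x i) (x k) - dist (σ i) (σ k)|) :
    d / 2 ≤ modGH X Y := by
  obtain ⟨i, hi⟩ := h
  exact le_modGH_of_forall_le_mapDistortion
    (le_mapDistortion_of_separated_of_forall_injective x hK i hi)

/-- Theorem 2 of the paper: let `K ∈ K_n(X)` be the `d`-bounded curvature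
of the tuple `x`, `d > 0`, `n ≤ |Y|`. If some row index `i` satisfies
`‖row_i(K) - row_i(L)‖_∞ ≥ d` for every `L ∈ PSPS^n(D^Y)` (every matrix
`(d_Y(σ j, σ k))` with `σ : Fin n → Y` injective), then `d̂_GH(X,Y) ≥ d/2`. -/
theorem stmt_14 {X Y : Type*} [MetricSpace X] [MetricSpace Y]
    [Fintype X] [Fintype Y] [Nonempty X] [Nonempty Y] {n : ℕ} {d : ℝ} (hd : 0 < d)
    (x : Fin n → X) (hK : ∀ i j : Fin n, i ≠ j → d ≤ dist (x i) (x j))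
    (hn : n ≤ Fintype.card Y)
    (h : ∃ i : Fin n, ∀ σ : Fin n → Y, Function.Injective σ →
      d ≤ ⨆ k : Fin n, |dist (x i) (x k) - dist (σ i) (σ k)|) :
    d / 2 ≤ modGH X Y :=
  stmt_14_general x hK h
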